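/- Let n > 2 be an integer, 0 < α ≤ 1/2, and let c ∈ [1 − 3α/n, 1). Define g ∈ ℝⁿ by g_i = (c^{i−1} − c^{n−1})/(1 + (α − 1)/n) for i = 1, …, n. Then g is not the zero vector and max_{i∈[n]} g_i² ≤ (3 + 3α)·(1/n)·Σ_{i=1}^{n} g_i²; in particular the maximum is attained at i = 1. -/

import Mathlib

/-!
Every entry is `(c ^ j - u) / D` with `u = c ^ (n - 1)` and `D > 0`, so `g` is nonnegative and
decreasing and its first entry `(1 - u) / D` is the largest. Summing geometric series,
`(1 - c²) ∑ (c ^ j - u)²` is a polynomial in `c`, `u` and `n`, and with `b = 1 - c` and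
`x = n b ≤ 3α` the bound `n (1 - u)² ≤ (3 + x) ∑ (c ^ j - u)²` becomes the nonnegativity of a
quadratic `Q_{x,b}(u)`. For `x ≥ 1` its discriminant is nonpositive. For `x ≤ 1` the inequality
is tight to fourth order at `x = 0` (as `b → 0`, `Q_{x,0}(e^{-x}) ~ x⁴ / 6`), so
`u = (1 - b) ^ (n - 1)` is bounded below by the degree-five truncation `L` of its binomial
expansion: `L` lies to the right of the vertex of `Q` and `Q(L) ≥ 0`. These two polynomial
inequalities hold on the simplex `p = 1 - x`, `q = x - 3b`, `r = 3b`, where they expand with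
nonnegative coefficients.
-/

open Finset

theorem one_sub_sq_mul_sum_sq_pow_sub {R : Type*} [CommRing R] (c v : R) (n : ℕ) :
    (1 - c ^ 2) * ∑ j ∈ range n, (c ^ j - v) ^ 2
      = 1 - (c ^ n) ^ 2 - 2 * v * (1 + c) * (1 - c ^ n) + n * (1 - c ^ 2) * v ^ 2 := by
  have hsplit : ∑ j ∈ range n, (c ^ j - v) ^ 2
      = ∑ j ∈ range n, (c ^ 2) ^ j - 2 * v * ∑ j ∈ range n, c ^ j + n * v ^ 2 := by
    simp_rw [show ∀ j : ℕ, (c ^ j - v) ^ 2 = (c ^ 2) ^ j - 2 * v * c ^ j + v ^ 2 from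
      fun j => by ring]
    rw [sum_add_distrib, sum_sub_distrib, ← mul_sum, sum_const, card_range, nsmul_eq_mul]
  rw [hsplit]
  linear_combination mul_neg_geom_sum (c ^ 2) n - 2 * v * (1 + c) * mul_neg_geom_sum c n

/-- Degree-five truncation of the binomial expansion of `(1 - b) ^ m`, written in `y = m b`;
as `b → 0` it is the Taylor polynomial of `exp (-y)`. -/
noncomputable def binomialTaylor5 (y b : ℝ) : ℝ :=
  1 - y + y * (y - b) / 2 - y * (y - b) * (y - 2 * b) / 6
    + y * (y - b) * (y - 2 * b) * (y - 3 * b) / 24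
    - y * (y - b) * (y - 2 * b) * (y - 3 * b) * (y - 4 * b) / 120

theorem binomialTaylor5_le_one_sub_pow {b : ℝ} (hb0 : 0 ≤ b) (hb1 : b ≤ 1) (m : ℕ) :
    binomialTaylor5 (m * b) b ≤ (1 - b) ^ m := by
  induction m with
  | zero => simp [binomialTaylor5]
  | succ m ih =>
    have hfalling : 0 ≤ (m : ℝ) * (m - 1) * (m - 2) * (m - 3) * (m - 4) := by
      rcases lt_or_ge m 5 with hm | hm
      · interval_cases m <;> norm_num
      · have hm' : (5 : ℝ) ≤ m := by exact_mod_cast hm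
        repeat' apply mul_nonneg
        all_goals linarith
    have hstep : binomialTaylor5 ((m + 1 : ℕ) * b) b = (1 - b) * binomialTaylor5 (m * b) b
        - b ^ 6 * ((m : ℝ) * (m - 1) * (m - 2) * (m - 3) * (m - 4)) / 120 := by
      simp only [binomialTaylor5]
      push_cast
      ring
    rw [hstep, pow_succ' (1 - b) m]
    nlinarith [mul_le_mul_of_nonneg_left ih (sub_nonneg.2 hb1),
      mul_nonneg (pow_nonneg hb0 6) hfalling]

def flatnessLead (x b : ℝ) : ℝ :=
  (2 * x ^ 2 + 7 * x + 9) - (x ^ 2 + 6 * x + 12) * b + (3 + x) * b ^ 2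

/-- For `c = 1 - b`, `x = n b` and `u = c ^ (n - 1)` this is
`(3 + x) (1 - c²) ∑ j < n, (c ^ j - u)² - x (1 + c) (1 - u)²`. -/
def flatnessQuad (x b u : ℝ) : ℝ :=
  flatnessLead x b * u ^ 2 - 2 * (6 - 3 * b) * u + (3 - x + x * b)

section

variable {x b : ℝ}

theorem flatnessLead_pos (hb : 0 ≤ b) (hbx : 3 * b ≤ x) (hx : x ≤ 3 / 2) :
    0 < flatnessLead x b := by
  unfold flatnessLead
  nlinarith [mul_nonneg (by nlinarith : (0 : ℝ) ≤ x ^ 2 + 6 * x + 12)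
      (by linarith : 0 ≤ x - 3 * b),
    mul_nonneg (by linarith : (0 : ℝ) ≤ 3 / 2 - x) (sq_nonneg x),
    mul_nonneg (by linarith : (0 : ℝ) ≤ 3 / 2 - x) (by linarith : (0 : ℝ) ≤ 3 / 2 + x),
    sq_nonneg b]

theorem flatnessQuad_nonneg_of_one_le (hb : 0 ≤ b) (hbx : 3 * b ≤ x) (h1x : 1 ≤ x)
    (hx : x ≤ 3 / 2) (u : ℝ) : 0 ≤ flatnessQuad x b u := by
  have hdisc : 0 ≤ (3 - x + x * b) * flatnessLead x b - (6 - 3 * b) ^ 2 := by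
    have hfactor : (3 - x + x * b) * flatnessLead x b - (6 - 3 * b) ^ 2
        = (x + 3) * ((x - 1) * (3 - 2 * x) + x * b * ((3 * x + 1) - (x + 4) * b + b ^ 2)) := by
      unfold flatnessLead
      ring
    have h1 : 0 ≤ (x - 1) * (3 - 2 * x) := mul_nonneg (by linarith) (by linarith)
    have h2 : 0 ≤ (3 * x + 1) - (x + 4) * b + b ^ 2 := by nlinarith
    have h3 : 0 ≤ x * b := mul_nonneg (by linarith) hb
    rw [hfactor]
    positivity
  have hsq : flatnessLead x b * flatnessQuad x b u
      = (flatnessLead x b * u - (6 - 3 * b)) ^ 2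
        + ((3 - x + x * b) * flatnessLead x b - (6 - 3 * b) ^ 2) := by
    unfold flatnessQuad
    ring
  refine nonneg_of_mul_nonneg_right ?_ (flatnessLead_pos hb hbx hx)
  rw [hsq]
  positivity

theorem six_sub_three_mul_le_flatnessLead_mul_binomialTaylor5 (hb : 0 ≤ b) (hbx : 3 * b ≤ x)
    (hx : x ≤ 1) : 6 - 3 * b ≤ flatnessLead x b * binomialTaylor5 (x - b) b := by
  obtain ⟨p, q, r, hp, hq, hr, hpx, hqx, hrb⟩ : ∃ p q r : ℝ,
      0 ≤ p ∧ 0 ≤ q ∧ 0 ≤ r ∧ p = 1 - x ∧ q = x - 3 * b ∧ r = 3 * b :=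
    ⟨_, _, _, by linarith, by linarith, by linarith, rfl, rfl, rfl⟩
  have hcert : flatnessLead x b * binomialTaylor5 (x - b) b - (6 - 3 * b)
      = 31/81 * r^8 + 145117/43740 * q*r^7 + 1091981/87480 * q^2*r^6 + 64789/2430 * q^3*r^5
        + 28699/810 * q^4*r^4 + 12166/405 * q^5*r^3 + 17119/1080 * q^6*r^2 + 851/180 * q^7*r
        + 3/5 * q^8 + 55/9 * p*r^7 + 129037/2916 * p*q*r^6 + 3999173/29160 * p*q^2*r^5
        + 1146109/4860 * p*q^3*r^4 + 157493/648 * p*q^4*r^3 + 16217/108 * p*q^5*r^2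
        + 1029/20 * p*q^6*r + 451/60 * p*q^7 + 862/27 * p^2*r^6 + 47386/243 * p^2*q*r^5
        + 2411837/4860 * p^2*q^2*r^4 + 54548/81 * p^2*q^3*r^3 + 111007/216 * p^2*q^4*r^2
        + 1882/9 * p^2*q^5*r + 1417/40 * p^2*q^6 + 6826/81 * p^3*r^5 + 229813/540 * p^3*q*r^4
        + 557221/648 * p^3*q^2*r^3 + 46919/54 * p^3*q^3*r^2 + 31607/72 * p^3*q^4*r
        + 5323/60 * p^3*q^5 + 3500/27 * p^4*r^4 + 56311/108 * p^4*q*r^3 + 169915/216 * p^4*q^2*r^2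
        + 6331/12 * p^4*q^3*r + 3185/24 * p^4*q^4 + 1097/9 * p^5*r^3 + 6601/18 * p^5*q*r^2
        + 2207/6 * p^5*q^2*r + 123 * p^5*q^3 + 208/3 * p^6*r^2 + 833/6 * p^6*q*r + 139/2 * p^6*q^2
        + 22 * p^7*r + 22 * p^7*q + 3 * p^8 := by
    subst hpx hqx hrb
    unfold flatnessLead binomialTaylor5
    ring
  rw [← sub_nonneg, hcert]
  positivity

set_option maxHeartbeats 1000000 in
theorem flatnessQuad_binomialTaylor5_nonneg (hb : 0 ≤ b) (hbx : 3 * b ≤ x) (hx : x ≤ 1) :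
    0 ≤ flatnessQuad x b (binomialTaylor5 (x - b) b) := by
  obtain ⟨p, q, r, hp, hq, hr, hpx, hqx, hrb⟩ : ∃ p q r : ℝ,
      0 ≤ p ∧ 0 ≤ q ∧ 0 ≤ r ∧ p = 1 - x ∧ q = x - 3 * b ∧ r = 3 * b :=
    ⟨_, _, _, by linarith, by linarith, by linarith, rfl, rfl, rfl⟩
  have hcert : flatnessQuad x b (binomialTaylor5 (x - b) b)
      = 205/729 * r^13 + 676183/196830 * q*r^12 + 4089114721/212576400 * q^2*r^11
        + 13882605709/212576400 * q^3*r^10 + 42458104243/283435200 * q^4*r^9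
        + 5780657017/23619600 * q^5*r^8 + 3068818327/10497600 * q^6*r^7
        + 1352256539/5248800 * q^7*r^6 + 583290029/3499200 * q^8*r^5 + 3771121/48600 * q^9*r^4
        + 9689167/388800 * q^10*r^3 + 36677/7200 * q^11*r^2 + 377/675 * q^12*r + 1/50 * q^13
        + 692/243 * p*r^12 + 210499/6561 * p*q*r^11 + 388013257/2361960 * p*q^2*r^10
        + 17888700271/35429400 * p*q^3*r^9 + 16311105553/15746400 * p*q^4*r^8
        + 391324409/262440 * p*q^5*r^7 + 1077284203/699840 * p*q^6*r^6
        + 111079439/97200 * p*q^7*r^5 + 175223401/291600 * p*q^8*r^4 + 261686/1215 * p*q^9*r^3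
        + 1261877/25920 * p*q^10*r^2 + 21119/3600 * p*q^11*r + 52/225 * p*q^12
        + 3137/243 * p^2*r^11 + 8737471/65610 * p^2*q*r^10 + 583881227/944784 * p^2*q^2*r^9
        + 40163809291/23619600 * p^2*q^3*r^8 + 19373211073/6298560 * p^2*q^4*r^7
        + 4019004851/1049760 * p^2*q^5*r^6 + 466152631/139968 * p^2*q^6*r^5
        + 1171978061/583200 * p^2*q^7*r^4 + 63263687/77760 * p^2*q^8*r^3
        + 886511/4320 * p^2*q^9*r^2 + 47261/1728 * p^2*q^10*r + 8557/7200 * p^2*q^11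
        + 25133/729 * p^3*r^10 + 31773179/98415 * p^3*q*r^9 + 3524548969/2624400 * p^3*q^2*r^8
        + 5135463563/1574640 * p^3*q^3*r^7 + 10717486337/2099520 * p^3*q^4*r^6
        + 62475107/11664 * p^3*q^5*r^5 + 4417299517/1166400 * p^3*q^6*r^4
        + 11396249/6480 * p^3*q^7*r^3 + 12973523/25920 * p^3*q^8*r^2 + 160429/2160 * p^3*q^9*r
        + 17033/4800 * p^3*q^10 + 14585/243 * p^4*r^9 + 1104034/2187 * p^4*q*r^8
        + 243577219/131220 * p^4*q^2*r^7 + 102484243/26244 * p^4*q^3*r^6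
        + 902067733/174960 * p^4*q^4*r^5 + 102581221/23328 * p^4*q^5*r^4
        + 23240771/9720 * p^4*q^6*r^3 + 1009427/1296 * p^4*q^7*r^2 + 280177/2160 * p^4*q^8*r
        + 1949/288 * p^4*q^9 + 17279/243 * p^5*r^8 + 11590541/21870 * p^5*q*r^7
        + 295914727/174960 * p^5*q^2*r^6 + 525726457/174960 * p^5*q^3*r^5
        + 83610301/25920 * p^5*q^4*r^4 + 20544659/9720 * p^5*q^5*r^3 + 1157077/1440 * p^5*q^6*r^2
        + 327793/2160 * p^5*q^7*r + 8207/960 * p^5*q^8 + 42271/729 * p^6*r^7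
        + 914443/2430 * p^6*q*r^6 + 7409857/7290 * p^6*q^2*r^5 + 21427571/14580 * p^6*q^3*r^4
        + 98090/81 * p^6*q^4*r^3 + 447379/810 * p^6*q^5*r^2 + 3601/30 * p^6*q^6*r
        + 1289/180 * p^6*q^7 + 2599/81 * p^7*r^6 + 23902/135 * p^7*q*r^5
        + 948151/2430 * p^7*q^2*r^4 + 280561/648 * p^7*q^3*r^3 + 17785/72 * p^7*q^4*r^2
        + 22723/360 * p^7*q^5*r + 461/120 * p^7*q^6 + 932/81 * p^8*r^5 + 42253/810 * p^8*q*r^4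
        + 28655/324 * p^8*q^2*r^3 + 1217/18 * p^8*q^3*r^2 + 757/36 * p^8*q^4*r + 6/5 * p^8*q^5
        + 65/27 * p^9*r^4 + 17/2 * p^9*q*r^3 + 268/27 * p^9*q^2*r^2 + 4 * p^9*q^3*r
        + 1/6 * p^9*q^4 + 2/9 * p^10*r^3 + 5/9 * p^10*q*r^2 + 1/3 * p^10*q^2*r := by
    subst hpx hqx hrb
    unfold flatnessQuad flatnessLead binomialTaylor5
    ring
  rw [hcert]
  positivity

theorem flatnessQuad_nonneg_of_le_one (hb : 0 ≤ b) (hbx : 3 * b ≤ x) (hx : x ≤ 1) {u : ℝ}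
    (hu : binomialTaylor5 (x - b) b ≤ u) : 0 ≤ flatnessQuad x b u := by
  set L := binomialTaylor5 (x - b) b
  have hlead := flatnessLead_pos hb hbx (by linarith)
  have hvertex := six_sub_three_mul_le_flatnessLead_mul_binomialTaylor5 hb hbx hx
  have hexpand : flatnessQuad x b u = flatnessQuad x b L + flatnessLead x b * (u - L) ^ 2
      + 2 * (u - L) * (flatnessLead x b * L - (6 - 3 * b)) := by
    unfold flatnessQuad
    ring
  rw [hexpand]
  have := flatnessQuad_binomialTaylor5_nonneg hb hbx hx
  have := mul_nonneg (sub_nonneg.2 hu) (sub_nonneg.2 hvertex)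
  positivity

end

theorem flatnessQuad_one_sub_pow_nonneg {n : ℕ} (hn : 3 ≤ n) {b : ℝ} (hb : 0 ≤ b)
    (hx : n * b ≤ 3 / 2) : 0 ≤ flatnessQuad (n * b) b ((1 - b) ^ (n - 1)) := by
  have hbx : 3 * b ≤ n * b := mul_le_mul_of_nonneg_right (by exact_mod_cast hn) hb
  rcases le_total (n * b) 1 with h1 | h1
  · refine flatnessQuad_nonneg_of_le_one hb hbx h1 ?_
    have := binomialTaylor5_le_one_sub_pow hb (by linarith) (n - 1)
    rwa [Nat.cast_sub (by omega), Nat.cast_one, sub_one_mul] at this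
  · exact flatnessQuad_nonneg_of_one_le hb hbx h1 hx _

theorem card_mul_sq_le_sum_sq_pow_sub {n : ℕ} (hn : 3 ≤ n) {c : ℝ} (hc1 : c < 1)
    (hx : n * (1 - c) ≤ 3 / 2) :
    n * (1 - c ^ (n - 1)) ^ 2
      ≤ (3 + n * (1 - c)) * ∑ j ∈ range n, (c ^ j - c ^ (n - 1)) ^ 2 := by
  set u := c ^ (n - 1)
  have hc : 0 < 1 + c := by
    have : (3 : ℝ) * (1 - c) ≤ n * (1 - c) :=
      mul_le_mul_of_nonneg_right (by exact_mod_cast hn) (by linarith)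
    linarith
  have hcn : c ^ n = c * u := by rw [← pow_succ', Nat.sub_add_cancel (by omega)]
  have hsum := one_sub_sq_mul_sum_sq_pow_sub c u n
  rw [hcn] at hsum
  have hQ := flatnessQuad_one_sub_pow_nonneg hn (b := 1 - c) (by linarith) hx
  rw [sub_sub_cancel] at hQ
  have hkey : (1 - c ^ 2) * ((3 + n * (1 - c)) * ∑ j ∈ range n, (c ^ j - u) ^ 2
      - n * (1 - u) ^ 2) = flatnessQuad (n * (1 - c)) (1 - c) u := by
    unfold flatnessQuad flatnessLead
    linear_combination (3 + n * (1 - c)) * hsum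
  have hpos : 0 < 1 - c ^ 2 := by nlinarith
  exact sub_nonneg.1 (nonneg_of_mul_nonneg_right (hkey ▸ hQ) hpos)

/-- for the gradient-shaped vector
`g_i = (c^{i−1} − c^{n−1})/(1 + (α−1)/n)` (1-based; here `g j = (c^j − c^{n−1})/…`
with 0-based `j`), `g` is nonzero, its squared entries are bounded by
`(3 + 3α)` times their average, and the maximum is attained at the first entry. -/
theorem gradient_flatness_bound {n : ℕ} (hn : 2 < n)
    (α : ℝ) (hα0 : 0 < α) (hα : α ≤ 1 / 2)
    (c : ℝ) (hc : 1 - 3 * α / n ≤ c) (hc1 : c < 1)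
    (g : Fin n → ℝ)
    (hg : ∀ i : Fin n, g i = (c ^ (i : ℕ) - c ^ (n - 1)) / (1 + (α - 1) / n)) :
    g ≠ 0 ∧
    (∀ i : Fin n, (g i) ^ 2 ≤ (3 + 3 * α) * ((1 / (n : ℝ)) * ∑ j, (g j) ^ 2)) ∧
    (∀ i : Fin n, (g i) ^ 2 ≤ (g (⟨0, by omega⟩ : Fin n)) ^ 2) := by
  have hn3 : (3 : ℝ) ≤ n := by exact_mod_cast hn
  have hx : n * (1 - c) ≤ 3 * α := by
    rw [← le_div_iff₀' (by positivity)]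
    linarith
  have hc0 : 0 ≤ c := by nlinarith
  set u := c ^ (n - 1)
  set D := 1 + (α - 1) / n
  have hD : 0 < D := by
    have : -1 < (α - 1) / n := by
      rw [lt_div_iff₀ (by positivity)]
      linarith
    linarith
  have hu : u < 1 := pow_lt_one₀ hc0 hc1 (by omega)
  have hg0 : g ⟨0, by omega⟩ = (1 - u) / D := by rw [hg]; simp
  have hmax : ∀ i, g i ^ 2 ≤ g ⟨0, by omega⟩ ^ 2 := by
    intro i
    have hui : u ≤ c ^ (i : ℕ) := pow_le_pow_of_le_one hc0 hc1.le (by omega)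
    rw [hg, hg0]
    gcongr
    exact pow_le_one₀ hc0 hc1.le
  refine ⟨fun h => ?_, fun i => (hmax i).trans ?_, hmax⟩
  · have := congrFun h ⟨0, by omega⟩
    rw [hg0] at this
    exact (div_pos (sub_pos.2 hu) hD).ne' this
  · have hsum : ∑ j, g j ^ 2 = (∑ j ∈ range n, (c ^ j - u) ^ 2) / D ^ 2 := by
      simp_rw [hg, div_pow]
      rw [← sum_div, Fin.sum_univ_eq_sum_range (fun j => (c ^ j - u) ^ 2)]
    have hbound := card_mul_sq_le_sum_sq_pow_sub (n := n) (by omega) hc1 (by linarith)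
    rw [hg0, hsum, div_pow, ← mul_div_assoc, ← mul_div_assoc]
    gcongr
    rw [one_div_mul_eq_div, mul_div_assoc', le_div_iff₀' (by positivity)]
    nlinarith [sum_nonneg fun j (_ : j ∈ range n) => sq_nonneg (c ^ j - u)]
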